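/- Explicit optimal weights (Proposition 1): for every integer r ≥ 1 and every function f : ℝ → ℝ, p^{2r-1}_{r-1}[f](x_{j-1/2}) = Σ_{k=0}^{r-1} C^{2r-1}_{r-1,k} · p^{r}_{k}[f](x_{j-1/2}), where C^{2r-1}_{r-1,k} = (1/2^{2r-1})·C(2r, 2k+1); moreover each C^{2r-1}_{r-1,k} > 0 and Σ_{k=0}^{r-1} C^{2r-1}_{r-1,k} = 1. -/

import Mathlib

/-- Value at the midpoint `x₀ + (j - 1/2)·h` of the Lagrange interpolant of `f`
at the `a+1` equally spaced nodes `x_{j+b-a}, …, x_{j+b}` where `x_m = x₀ + m·h`. -/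
noncomputable def Pval (h x₀ : ℝ) (j a b : ℤ) (f : ℝ → ℝ) : ℝ :=
  (Lagrange.interpolate (Finset.Icc (j + b - a) (j + b)) (fun m : ℤ => x₀ + (m : ℝ) * h)
    (fun m : ℤ => f (x₀ + (m : ℝ) * h))).eval (x₀ + ((j : ℝ) - 1 / 2) * h)

/-- The classical optimal weights `C^{2r-1}_{r-1,k} = 2^{-(2r-1)} · C(2r, 2k+1)`. -/
noncomputable def Copt (r k : ℕ) : ℝ :=
  (1 / 2 ^ (2 * r - 1)) * (Nat.choose (2 * r) (2 * k + 1) : ℝ)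

/-!
After rescaling the nodes to `0, 1, …, a`, the first barycentric form gives the value of an
interpolant at a half-integer `y` as `∑ₚ ω(y) wₚ (y - p)⁻¹ f(xₚ)`, where `ω` is the nodal
polynomial and `wₚ = (-1)^(a+p) C(a,p) / a!`. At a half-integer, `ω(y)` is a signed product of
two Pochhammer symbols `(1/2)ₙ`. With these closed forms, the coefficient of `f(x_{j-r+t})` is
`C(2r-1, t) · μ(t)` in the big interpolant and `C(r-1, k) C(r, t-k) · μ(t)` in `C_k · p^r_k`,
with the same `μ` (`midpointFactor`) in both. Vandermonde's identity
`∑ₖ C(r-1,k) C(r,t-k) = C(2r-1,t)` then gives the identity. Applying it to `f = 1` gives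
`∑ₖ C_k = 1`.
-/

open Finset Nat Polynomial Lagrange

theorem Lagrange.eval_interpolate_affine {F ι : Type*} [Field F] [DecidableEq ι] (s : Finset ι)
    (v r : ι → F) {β : F} (hβ : β ≠ 0) (α x : F) :
    (interpolate s (fun i => α + v i * β) r).eval (α + x * β) = (interpolate s v r).eval x := by
  simp only [interpolate_apply, eval_finsetSum, eval_mul, eval_C, Lagrange.basis, eval_prod,
    basisDivisor, eval_sub, eval_X]
  refine sum_congr rfl fun i _ => congrArg _ <| prod_congr rfl fun k _ => ?_
  rw [show α + v i * β - (α + v k * β) = (v i - v k) * β by ring,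
    show α + x * β - (α + v k * β) = (x - v k) * β by ring, mul_inv, mul_mul_mul_comm,
    inv_mul_cancel₀ hβ, mul_one]

theorem Lagrange.interpolate_map {F ι κ : Type*} [Field F] [DecidableEq ι] [DecidableEq κ]
    (s : Finset κ) (e : κ ↪ ι) (v r : ι → F) :
    interpolate (s.map e) v r = interpolate s (v ∘ e) (r ∘ e) := by
  simp only [interpolate_apply, sum_map, Lagrange.basis, ← map_erase, prod_map,
    Function.comp_apply]

theorem Finset.Icc_add_natCast_eq_map_range (c : ℤ) (a : ℕ) :
    Icc c (c + a) = (range (a + 1)).map (Nat.castEmbedding.trans (addLeftEmbedding c)) := by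
  ext n
  simp only [mem_Icc, mem_map, mem_range, Function.Embedding.trans_apply,
    Nat.castEmbedding_apply, addLeftEmbedding_apply]
  constructor
  · rintro ⟨h₁, h₂⟩
    exact ⟨(n - c).toNat, by omega, by omega⟩
  · rintro ⟨p, hp, rfl⟩
    omega

theorem prod_erase_range_natCast_sub {K : Type*} [CommRing K] (p s : ℕ) :
    ∏ q ∈ (range (p + s + 1)).erase p, ((p : K) - q) = (-1) ^ s * p ! * s ! := by
  induction s with
  | zero =>
    rw [add_zero, range_add_one, erase_insert (by simp), prod_range_natCast_sub,
      ← descFactorial_eq_prod_range, descFactorial_self]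
    simp
  | succ s ih =>
    rw [← add_assoc, range_add_one, erase_insert_of_ne (by omega), prod_insert (by simp), ih,
      factorial_succ]
    push_cast
    ring

theorem Lagrange.nodalWeight_range_natCast {K : Type*} [Field K] [CharZero K] {n p : ℕ}
    (hp : p ≤ n) :
    nodalWeight (range (n + 1)) (Nat.cast : ℕ → K) p = (-1) ^ (n + p) * n.choose p / n ! := by
  obtain ⟨s, rfl⟩ := Nat.exists_eq_add_of_le hp
  have hfac : ∀ m : ℕ, (m ! : K) ≠ 0 := fun m => Nat.cast_ne_zero.2 (factorial_ne_zero m)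
  rw [nodalWeight, prod_inv_distrib, prod_erase_range_natCast_sub,
    Nat.cast_choose K (Nat.le_add_right p s), Nat.add_sub_cancel_left,
    show p + s + p = s + 2 * p by ring, pow_add, pow_mul]
  field_simp [hfac]
  simp [pow_right_comm _ s 2]

noncomputable def halfPochhammer (n : ℕ) : ℝ :=
  ∏ i ∈ range n, ((i : ℝ) + 1 / 2)

theorem halfPochhammer_eq (n : ℕ) : halfPochhammer n = (2 * n)! / (4 ^ n * n !) := by
  induction n with
  | zero => simp [halfPochhammer]
  | succ n ih =>
    rw [halfPochhammer, prod_range_succ, ← halfPochhammer, ih,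
      show 2 * (n + 1) = 2 * n + 1 + 1 by ring, factorial_succ, factorial_succ, factorial_succ]
    field_simp
    push_cast
    ring

theorem Lagrange.eval_nodal_range_natCast_sub_half (a b : ℕ) :
    (nodal (range (a + b)) (Nat.cast : ℕ → ℝ)).eval ((a : ℝ) - 1 / 2) =
      (-1) ^ b * halfPochhammer a * halfPochhammer b := by
  have hlow : ∀ i ∈ range a, (a : ℝ) - 1 / 2 - ((a - 1 - i : ℕ) : ℝ) = i + 1 / 2 := by
    intro i hi
    rw [Nat.cast_sub (by simp at hi; omega), Nat.cast_sub (by simp at hi; omega)]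
    ring
  have hhigh : ∀ i ∈ range b, (a : ℝ) - 1 / 2 - ((a + i : ℕ) : ℝ) = -1 * (i + 1 / 2) := by
    intro i _
    push_cast
    ring
  rw [eval_nodal, prod_range_add, ← prod_range_reflect _ a, prod_congr rfl hlow,
    prod_congr rfl hhigh, prod_mul_distrib, prod_const, card_range, halfPochhammer,
    halfPochhammer]
  ring

theorem sum_range_sum_range_choose_mul_smul {M : Type*} [AddCommMonoid M] (m n : ℕ)
    (g : ℕ → M) :
    ∑ k ∈ range (m + 1), ∑ p ∈ range (n + 1), (m.choose k * n.choose p) • g (k + p) =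
      ∑ t ∈ range (m + n + 1), (m + n).choose t • g t := by
  set F : ℕ × ℕ → M := fun x => (m.choose x.1 * n.choose x.2) • g (x.1 + x.2)
  have hfiber : ∀ t, ∑ x ∈ range (m + 1) ×ˢ range (n + 1) with x.1 + x.2 = t, F x =
      (m + n).choose t • g t := by
    intro t
    rw [add_choose_eq, sum_smul]
    refine sum_subset (fun x hx => ?_) (fun x hx hx' => ?_) |>.trans
      (sum_congr rfl fun x hx => by rw [← HasAntidiagonal.mem_antidiagonal.1 hx])
    · simpa using (mem_filter.1 hx).2
    · have : m < x.1 ∨ n < x.2 := by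
        simp only [mem_filter, mem_product, mem_range, not_and] at hx'
        rw [HasAntidiagonal.mem_antidiagonal] at hx
        omega
      rcases this with h | h <;> simp [F, choose_eq_zero_of_lt h]
  rw [← sum_product' (f := fun k p => (m.choose k * n.choose p) • g (k + p)),
    ← sum_fiberwise_of_maps_to (t := range (m + n + 1)) (g := fun x => x.1 + x.2)]
  · exact sum_congr rfl fun t _ => hfiber t
  · intro x hx
    simp only [mem_product, mem_range] at hx ⊢
    omega

theorem Copt_pos {r k : ℕ} (hk : k < r) : 0 < Copt r k := by
  have : 0 < (2 * r).choose (2 * k + 1) := choose_pos (by omega)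
  unfold Copt
  positivity

theorem Copt_mul_halfPochhammer_mul_halfPochhammer (k d : ℕ) :
    Copt (k + d + 1) k * halfPochhammer (d + 1) * halfPochhammer (k + 1) / (k + d + 1)! =
      (k + d).choose k * halfPochhammer (k + d + 1) ^ 2 / (2 * (k + d) + 1)! := by
  rw [Copt, halfPochhammer_eq, halfPochhammer_eq, halfPochhammer_eq,
    show 2 * (k + d + 1) - 1 = 2 * (k + d) + 1 by omega,
    Nat.cast_choose ℝ (show 2 * k + 1 ≤ 2 * (k + d + 1) by omega),
    Nat.cast_choose ℝ (show k ≤ k + d by omega),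
    show 2 * (k + d + 1) - (2 * k + 1) = 2 * d + 1 by omega, Nat.add_sub_cancel_left,
    show 2 * (d + 1) = 2 * d + 1 + 1 by ring, show 2 * (k + 1) = 2 * k + 1 + 1 by ring,
    show 2 * (k + d + 1) = 2 * (k + d) + 1 + 1 by ring]
  simp only [factorial_succ, show (4 : ℝ) = 2 ^ 2 by norm_num, ← pow_mul]
  field_simp
  push_cast
  ring

noncomputable def midpointFactor (m t : ℕ) : ℝ :=
  (-1) ^ (m + t) * halfPochhammer (m + 1) ^ 2 / ((2 * m + 1)! * ((m : ℝ) + 1 / 2 - t))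

theorem nodal_mul_nodalWeight_center {m t : ℕ} (ht : t ≤ 2 * m + 1) :
    (nodal (range (2 * m + 1 + 1)) (Nat.cast : ℕ → ℝ)).eval ((m : ℝ) + 1 / 2) *
        nodalWeight (range (2 * m + 1 + 1)) (Nat.cast : ℕ → ℝ) t * ((m : ℝ) + 1 / 2 - t)⁻¹ =
      (2 * m + 1).choose t * midpointFactor m t := by
  have hsign : (-1 : ℝ) ^ (m + 1) * (-1) ^ (2 * m + 1 + t) = (-1) ^ (m + t) := by
    rw [← pow_add, show m + 1 + (2 * m + 1 + t) = m + t + 2 * (m + 1) by ring, pow_add,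
      pow_mul, neg_one_sq, one_pow, mul_one]
  rw [nodalWeight_range_natCast ht,
    show (m : ℝ) + 1 / 2 = ((m + 1 : ℕ) : ℝ) - 1 / 2 by push_cast; ring,
    show 2 * m + 1 + 1 = (m + 1) + (m + 1) by ring,
    eval_nodal_range_natCast_sub_half, midpointFactor, ← hsign]
  push_cast
  field_simp
  ring

theorem Copt_mul_nodal_mul_nodalWeight_stencil {m k p : ℕ} (hk : k ≤ m) (hp : p ≤ m + 1) :
    Copt (m + 1) k *
        ((nodal (range (m + 1 + 1)) (Nat.cast : ℕ → ℝ)).eval ((m : ℝ) + 1 / 2 - k) *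
          nodalWeight (range (m + 1 + 1)) (Nat.cast : ℕ → ℝ) p * ((m : ℝ) + 1 / 2 - k - p)⁻¹) =
      m.choose k * (m + 1).choose p * midpointFactor m (k + p) := by
  obtain ⟨d, rfl⟩ := Nat.exists_eq_add_of_le hk
  have hsign : (-1 : ℝ) ^ (k + 1) * (-1) ^ (k + d + 1 + p) = (-1) ^ (k + d + (k + p)) := by
    rw [← pow_add, show k + 1 + (k + d + 1 + p) = k + d + (k + p) + 2 * 1 by ring, pow_add,
      pow_mul, neg_one_sq, one_pow, mul_one]
  rw [nodalWeight_range_natCast hp,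
    show (↑(k + d) : ℝ) + 1 / 2 - k = ((d + 1 : ℕ) : ℝ) - 1 / 2 by push_cast; ring,
    show k + d + 1 + 1 = (d + 1) + (k + 1) by ring,
    eval_nodal_range_natCast_sub_half]
  calc _ = (Copt (k + d + 1) k * halfPochhammer (d + 1) * halfPochhammer (k + 1) /
          (k + d + 1)!) * ((-1) ^ (k + 1) * (-1) ^ (k + d + 1 + p) * (k + d + 1).choose p *
          (((d + 1 : ℕ) : ℝ) - 1 / 2 - p)⁻¹) := by ring
    _ = _ := by
      rw [Copt_mul_halfPochhammer_mul_halfPochhammer, hsign, midpointFactor]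
      push_cast
      field_simp
      ring

theorem Pval_eq_sum {h : ℝ} (hh : h ≠ 0) (x₀ : ℝ) (j : ℤ) (a : ℕ) (b : ℤ) {y c : ℝ}
    (hy : (a : ℝ) - b - 1 / 2 = y) (hc : (j : ℝ) + b - a = c) (f : ℝ → ℝ) :
    Pval h x₀ j a b f = ∑ p ∈ range (a + 1),
      (nodal (range (a + 1)) (Nat.cast : ℕ → ℝ)).eval y *
        nodalWeight (range (a + 1)) (Nat.cast : ℕ → ℝ) p * (y - p)⁻¹ * f (x₀ + (c + p) * h) := by
  have hy_ne : ∀ p ∈ range (a + 1), y ≠ (p : ℝ) := by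
    intro p _ hyp
    have : ((2 * (a - b - p) : ℤ) : ℝ) = 1 := by push_cast; linarith
    norm_cast at this
    omega
  have hIcc : Icc (j + b - a) (j + b) =
      (range (a + 1)).map (Nat.castEmbedding.trans (addLeftEmbedding (j + b - a))) := by
    rw [← Icc_add_natCast_eq_map_range, sub_add_cancel]
  have hv : (fun m : ℤ => x₀ + (m : ℝ) * h) ∘
      Nat.castEmbedding.trans (addLeftEmbedding (j + b - a)) =
        fun p : ℕ => (x₀ + c * h) + (p : ℝ) * h := by
    funext p
    simp only [Function.comp_apply, Function.Embedding.trans_apply, Nat.castEmbedding_apply,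
      addLeftEmbedding_apply, ← hc]
    push_cast
    ring
  have hx : x₀ + ((j : ℝ) - 1 / 2) * h = (x₀ + c * h) + y * h := by rw [← hy, ← hc]; ring
  rw [Pval, hIcc, interpolate_map, hv, hx, eval_interpolate_affine _ _ _ hh,
    eval_interpolate_not_at_node _ hy_ne, mul_sum]
  refine sum_congr rfl fun p _ => ?_
  simp only [Function.comp_apply, Function.Embedding.trans_apply, Nat.castEmbedding_apply,
    addLeftEmbedding_apply, ← hc, mul_assoc]
  push_cast
  ring_nf

theorem Pval_one {h : ℝ} (hh : h ≠ 0) (x₀ : ℝ) (j : ℤ) {a : ℤ} (ha : 0 ≤ a) (b : ℤ) :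
    Pval h x₀ j a b (fun _ => 1) = 1 := by
  have hinj : Set.InjOn (fun m : ℤ => x₀ + (m : ℝ) * h) (Icc (j + b - a) (j + b)) :=
    fun m _ n _ hmn => by simpa [hh] using hmn
  rw [Pval, show (fun m : ℤ => (fun _ : ℝ => (1 : ℝ)) (x₀ + m * h)) = 1 from rfl,
    interpolate_one hinj ⟨j + b, by simp; omega⟩, eval_one]

theorem Pval_eq_sum_Copt_mul_Pval {h : ℝ} (hh : h ≠ 0) (x₀ : ℝ) (j : ℤ) (m : ℕ) (f : ℝ → ℝ) :
    Pval h x₀ j (2 * ((m + 1 : ℕ) : ℤ) - 1) (((m + 1 : ℕ) : ℤ) - 1) f =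
      ∑ k ∈ range (m + 1), Copt (m + 1) k * Pval h x₀ j ((m + 1 : ℕ) : ℤ) (k : ℤ) f := by
  set g : ℕ → ℝ := fun t => midpointFactor m t * f (x₀ + ((j : ℝ) - (m + 1) + t) * h)
  calc _ = ∑ t ∈ range (m + (m + 1) + 1), (m + (m + 1)).choose t • g t := by
        rw [show 2 * ((m + 1 : ℕ) : ℤ) - 1 = ((2 * m + 1 : ℕ) : ℤ) by push_cast; ring,
          Pval_eq_sum hh x₀ j (2 * m + 1) _ (y := m + 1 / 2) (c := j - (m + 1))
            (by push_cast; ring) (by push_cast; ring),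
          show m + (m + 1) = 2 * m + 1 by ring]
        refine sum_congr rfl fun t ht => ?_
        rw [nodal_mul_nodalWeight_center (Nat.lt_succ_iff.1 (mem_range.1 ht)), nsmul_eq_mul]
        ring
    _ = ∑ k ∈ range (m + 1), ∑ p ∈ range (m + 1 + 1),
          (m.choose k * (m + 1).choose p) • g (k + p) :=
        (sum_range_sum_range_choose_mul_smul m (m + 1) g).symm
    _ = _ := sum_congr rfl fun k hk => by
        rw [Pval_eq_sum hh x₀ j (m + 1) k (y := m + 1 / 2 - k) (c := j - (m + 1) + k)
          (by push_cast; ring) (by push_cast; ring), mul_sum]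
        refine sum_congr rfl fun p hp => ?_
        rw [← mul_assoc, Copt_mul_nodal_mul_nodalWeight_stencil
          (Nat.lt_succ_iff.1 (mem_range.1 hk)) (Nat.lt_succ_iff.1 (mem_range.1 hp))]
        simp only [g, nsmul_eq_mul]
        push_cast
        ring_nf

theorem optimal_weights (h x₀ : ℝ) (hh : 0 < h) (j : ℤ) (r : ℕ) (hr : 1 ≤ r) :
    (∀ f : ℝ → ℝ,
        Pval h x₀ j (2 * (r : ℤ) - 1) ((r : ℤ) - 1) f =
          ∑ k ∈ Finset.range r, Copt r k * Pval h x₀ j (r : ℤ) (k : ℤ) f) ∧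
      (∀ k < r, 0 < Copt r k) ∧
      (∑ k ∈ Finset.range r, Copt r k) = 1 := by
  obtain ⟨m, rfl⟩ : ∃ m, r = m + 1 := ⟨r - 1, by omega⟩
  have hweights := Pval_eq_sum_Copt_mul_Pval hh.ne' x₀ j m
  refine ⟨hweights, fun k hk => Copt_pos hk, ?_⟩
  have hconst := hweights fun _ => 1
  rw [Pval_one hh.ne' x₀ j (by omega)] at hconst
  simp only [Pval_one hh.ne' x₀ j (Int.natCast_nonneg _), mul_one] at hconst
  exact hconst.symm
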